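/- arXiv:2006.12105 — 3 statements merged into one kernel-verified Lean document; each statement's English description precedes it below -/
import Mathlib

section
/- Let f be an inner function on the unit disc with f(0)=0, and let f also denote its boundary map on the unit circle. Then for any integrable function G on the unit circle, the integral of G∘f with respect to normalized Lebesgue measure m equals the integral of G with respect to m. -/
/-!
Let `μ` be the image of `m` under the boundary map `F`. Both `μ` and `m` are probability measures
carried by the unit circle, where `z̄ = z⁻¹`; the star algebra generated by an injective bounded
continuous function separates finite measures, so such a measure is determined by its moments
`∫ zⁿ`, `n ≥ 1`. For `m` these vanish by the mean value property. For `μ` they are `∫ Fⁿ dm`, the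
limit as `r → 1` of `∫ f(rz)ⁿ dm = f(0)ⁿ = 0`, by dominated convergence since `|f| < 1`. Hence
`μ = m`, which is the change of variables formula.
-/

open MeasureTheory Set Metric Filter Complex

/-- Normalized Lebesgue (arc-length) measure on the unit circle, as a measure on ℂ. -/
noncomputable def m : Measure ℂ :=
  (ENNReal.ofReal (2 * Real.pi))⁻¹ •
    (Measure.map (fun θ : ℝ => Complex.exp ((θ : ℂ) * Complex.I))
      (volume.restrict (Set.Ioc (0:ℝ) (2 * Real.pi))))

/-- `spow F ε n` is `F^[n]` if `ε = 1` and its complex conjugate if `ε = -1`. -/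
noncomputable def spow (F : ℂ → ℂ) (ε : ℤ) (n : ℕ) (z : ℂ) : ℂ :=
  if ε = 1 then F^[n] z else (starRingEnd ℂ) (F^[n] z)

open Topology BoundedContinuousFunction ComplexConjugate

lemma ae_m_norm_eq_one : ∀ᵐ z ∂m, ‖z‖ = 1 := by
  rw [m, Measure.ae_ennreal_smul_measure_iff (by simp [ENNReal.mul_eq_top]),
    ae_map_iff (by fun_prop) (measurableSet_eq_fun (by fun_prop) measurable_const)]
  simp [Complex.norm_exp_ofReal_mul_I]

instance : IsProbabilityMeasure m := by
  constructor
  rw [m, Measure.smul_apply, Measure.map_apply (by fun_prop) MeasurableSet.univ]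
  simp [ENNReal.inv_mul_cancel, Real.pi_pos, ENNReal.mul_eq_top]

lemma integral_m_eq_circleAverage {E : Type*} [NormedAddCommGroup E] [NormedSpace ℝ E]
    {g : ℂ → E} (hg : AEStronglyMeasurable g m) :
    ∫ z, g z ∂m = Real.circleAverage g 0 1 := by
  have hc : (ENNReal.ofReal (2 * Real.pi))⁻¹ ≠ 0 := by simp [ENNReal.mul_eq_top]
  rw [m] at hg ⊢
  rw [integral_smul_measure,
    integral_map (by fun_prop) (hg.mono_ac (Measure.absolutelyContinuous_smul hc)),
    Real.circleAverage_def, intervalIntegral.integral_of_le Real.two_pi_pos.le,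
    ENNReal.toReal_inv, ENNReal.toReal_ofReal Real.two_pi_pos.le]
  simp [circleMap]

lemma aestronglyMeasurable_m_of_continuousOn {E : Type*} [TopologicalSpace E]
    [TopologicalSpace.PseudoMetrizableSpace E] {g : ℂ → E} (hg : ContinuousOn g (sphere 0 1)) :
    AEStronglyMeasurable g m := by
  rw [← Measure.restrict_eq_self_of_ae_mem (μ := m) (s := sphere 0 1)
    (by simpa using ae_m_norm_eq_one)]
  exact hg.aestronglyMeasurable isClosed_sphere.measurableSet

lemma integral_m_eq_of_diffContOnCl {E : Type*} [NormedAddCommGroup E] [NormedSpace ℂ E]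
    [CompleteSpace E] {g : ℂ → E} (hg : DiffContOnCl ℂ g (ball 0 1)) :
    ∫ z, g z ∂m = g 0 := by
  have hcont : ContinuousOn g (sphere 0 1) :=
    hg.continuousOn.mono (by simpa [closure_ball] using sphere_subset_closedBall)
  rw [integral_m_eq_circleAverage (aestronglyMeasurable_m_of_continuousOn hcont)]
  exact DiffContOnCl.circleAverage (R := 1) (by simpa using hg)

lemma integral_m_pow {n : ℕ} (hn : n ≠ 0) : ∫ z, z ^ n ∂m = 0 := by
  simpa [hn] using integral_m_eq_of_diffContOnCl (differentiable_pow n).diffContOnCl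

lemma mapsTo_const_mul_closedBall {c : ℂ} (hc : ‖c‖ < 1) :
    MapsTo (fun z => c * z) (closedBall 0 1) (ball 0 1) := fun z hz => by
  simp only [mem_closedBall_zero_iff, mem_ball_zero_iff, norm_mul] at hz ⊢
  nlinarith [norm_nonneg c]

lemma exists_seq_mem_Ioo_tendsto_nhdsLT_one :
    ∃ r : ℕ → ℝ, (∀ n, r n ∈ Ioo 0 1) ∧ Tendsto r atTop (𝓝[<] 1) := by
  obtain ⟨r, -, hr, hlim⟩ := exists_seq_strictMono_tendsto' (zero_lt_one' ℝ)
  exact ⟨r, hr, tendsto_nhdsWithin_iff.2 ⟨hlim, .of_forall fun n => (hr n).2⟩⟩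

lemma norm_ofReal_lt_one_of_mem_Ioo {r : ℝ} (hr : r ∈ Ioo 0 1) : ‖(r : ℂ)‖ < 1 := by
  rw [Complex.norm_real, Real.norm_of_nonneg hr.1.le]
  exact hr.2

section RadialLimit

variable {E : Type*} [NormedAddCommGroup E] {g G : ℂ → E}

lemma aestronglyMeasurable_of_radialLimit (hg : ContinuousOn g (ball 0 1))
    (hG : ∀ᵐ z ∂m, Tendsto (fun r : ℝ => g (r * z)) (𝓝[<] 1) (𝓝 (G z))) :
    AEStronglyMeasurable G m := by
  obtain ⟨r, hr, hlim⟩ := exists_seq_mem_Ioo_tendsto_nhdsLT_one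
  refine aestronglyMeasurable_of_tendsto_ae atTop (fun n => ?_)
    (hG.mono fun z hz => hz.comp hlim)
  exact aestronglyMeasurable_m_of_continuousOn <| hg.comp (by fun_prop)
    ((mapsTo_const_mul_closedBall (norm_ofReal_lt_one_of_mem_Ioo (hr n))).mono_left
      sphere_subset_closedBall)

variable [NormedSpace ℂ E] [CompleteSpace E]

lemma integral_m_eq_of_radialLimit (hg : DifferentiableOn ℂ g (ball 0 1)) {C : ℝ}
    (hC : ∀ z ∈ ball 0 1, ‖g z‖ ≤ C)
    (hG : ∀ᵐ z ∂m, Tendsto (fun r : ℝ => g (r * z)) (𝓝[<] 1) (𝓝 (G z))) :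
    ∫ z, G z ∂m = g 0 := by
  obtain ⟨r, hr, hlim⟩ := exists_seq_mem_Ioo_tendsto_nhdsLT_one
  have hmaps n := mapsTo_const_mul_closedBall (norm_ofReal_lt_one_of_mem_Ioo (hr n))
  have hmean (n : ℕ) : ∫ z, g (r n * z) ∂m = g 0 := by
    simpa using integral_m_eq_of_diffContOnCl
      ((hg.comp (by fun_prop) (hmaps n)).diffContOnCl_ball subset_rfl)
  have hdom := tendsto_integral_of_dominated_convergence (fun _ => C)
    (fun n => aestronglyMeasurable_m_of_continuousOn <| hg.continuousOn.comp (by fun_prop)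
      ((hmaps n).mono_left sphere_subset_closedBall))
    (integrable_const C)
    (fun n => ae_m_norm_eq_one.mono fun z hz =>
      hC _ (hmaps n (mem_closedBall_zero_iff.2 hz.le)))
    (hG.mono fun z hz => hz.comp hlim)
  simp only [Function.comp_def, hmean] at hdom
  exact tendsto_nhds_unique hdom tendsto_const_nhds

end RadialLimit

theorem MeasureTheory.Measure.ext_of_integral_pow_mul_conj_pow_eq {E : Type*}
    [TopologicalSpace E] [PolishSpace E] [MeasurableSpace E] [BorelSpace E]
    {μ ν : Measure E} [IsFiniteMeasure μ] [IsFiniteMeasure ν] {ψ : E →ᵇ ℂ}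
    (hψ : Function.Injective ψ)
    (h : ∀ a b : ℕ, ∫ x, ψ x ^ a * conj (ψ x) ^ b ∂μ = ∫ x, ψ x ^ a * conj (ψ x) ^ b ∂ν) :
    μ = ν := by
  refine ext_of_forall_mem_subalgebra_integral_eq_of_polish (A := StarAlgebra.adjoin ℂ {ψ})
    (fun x y hxy => ⟨ψ, ⟨_, ⟨ψ, StarAlgebra.subset_adjoin ℂ {ψ} rfl, rfl⟩, rfl⟩, hψ.ne hxy⟩)
    fun g hg => ?_
  have hspan : g ∈ Submodule.span ℂ (Submonoid.closure {ψ, star ψ}) := by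
    rw [← Algebra.adjoin_eq_span, Set.pair_comm, ← Set.union_singleton, ← Set.star_singleton]
    exact hg
  clear hg
  induction hspan using Submodule.span_induction with
  | mem g hg =>
    obtain ⟨a, b, rfl⟩ := (Submonoid.mem_closure_pair _ _ _).1 hg
    simpa using h a b
  | zero => simp
  | add g₁ g₂ _ _ h₁ h₂ =>
    rw [BoundedContinuousFunction.coe_add, integral_add' (g₁.integrable μ) (g₂.integrable μ),
      integral_add' (g₁.integrable ν) (g₂.integrable ν), h₁, h₂]
  | smul c g _ hg =>
    simp only [BoundedContinuousFunction.coe_smul]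
    rw [integral_smul, integral_smul, hg]

lemma integral_zpow_eq_of_ae_norm_eq_one {μ ν : Measure ℂ} (hμ : ∀ᵐ z ∂μ, ‖z‖ = 1)
    (hν : ∀ᵐ z ∂ν, ‖z‖ = 1) (h : ∀ n : ℕ, ∫ z, z ^ n ∂μ = ∫ z, z ^ n ∂ν) (k : ℤ) :
    ∫ z, z ^ k ∂μ = ∫ z, z ^ k ∂ν := by
  have integral_zpow_neg {ρ : Measure ℂ} (hρ : ∀ᵐ z ∂ρ, ‖z‖ = 1) (n : ℕ) :
      ∫ z, z ^ (-n : ℤ) ∂ρ = conj (∫ z, z ^ n ∂ρ) := by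
    rw [← integral_conj]
    refine integral_congr_ae (hρ.mono fun z hz => ?_)
    dsimp only
    rw [zpow_neg, zpow_natCast, Complex.inv_eq_conj (by rw [norm_pow, hz, one_pow])]
  obtain ⟨n, rfl | rfl⟩ := Int.eq_nat_or_neg k
  · simpa using h n
  · rw [integral_zpow_neg hμ, integral_zpow_neg hν, h n]

theorem MeasureTheory.Measure.ext_of_integral_pow_eq_of_ae_norm_eq_one {μ ν : Measure ℂ}
    [IsFiniteMeasure μ] [IsFiniteMeasure ν] (hμ : ∀ᵐ z ∂μ, ‖z‖ = 1) (hν : ∀ᵐ z ∂ν, ‖z‖ = 1)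
    (h : ∀ n : ℕ, ∫ z, z ^ n ∂μ = ∫ z, z ^ n ∂ν) : μ = ν := by
  -- injective on `ℂ`, and `z / √2` on the unit circle
  let ψ : ℂ →ᵇ ℂ := .ofNormedAddCommGroup (fun z => Homeomorph.unitBall z) (by fun_prop) 1
    fun z => (mem_ball_zero_iff.1 (Homeomorph.unitBall z).2).le
  have hψ : Function.Injective ψ := Subtype.val_injective.comp Homeomorph.unitBall.injective
  set c : ℂ := (((√2)⁻¹ : ℝ) : ℂ)
  have hmon {z : ℂ} (hz : ‖z‖ = 1) (a b : ℕ) :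
      ψ z ^ a * conj (ψ z) ^ b = c ^ (a + b) * z ^ ((a : ℤ) - b) := by
    have hz0 : z ≠ 0 := norm_ne_zero_iff.1 (by rw [hz]; exact one_ne_zero)
    have hψz : ψ z = c * z := by
      simp [ψ, Homeomorph.unitBall_apply_coe, OpenPartialHomeomorph.univUnitBall_apply, hz, c,
        one_add_one_eq_two]
    rw [hψz, map_mul, Complex.conj_ofReal, ← Complex.inv_eq_conj hz, zpow_sub₀ hz0]
    simp only [zpow_natCast]
    ring
  refine ext_of_integral_pow_mul_conj_pow_eq hψ fun a b => ?_
  rw [integral_congr_ae (hμ.mono fun z hz => hmon hz a b),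
    integral_congr_ae (hν.mono fun z hz => hmon hz a b), integral_const_mul, integral_const_mul,
    integral_zpow_eq_of_ae_norm_eq_one hμ hν h]

theorem map_m_eq_m_of_radialLimit {f F : ℂ → ℂ} (hf : DifferentiableOn ℂ f (ball 0 1))
    (hmap : MapsTo f (ball 0 1) (ball 0 1)) (h0 : f 0 = 0)
    (hbd : ∀ᵐ z ∂m, Tendsto (fun r : ℝ => f (r * z)) (𝓝[<] 1) (𝓝 (F z)))
    (hinner : ∀ᵐ z ∂m, ‖F z‖ = 1) :
    m.map F = m := by
  have hF : AEMeasurable F m :=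
    (aestronglyMeasurable_of_radialLimit hf.continuousOn hbd).aemeasurable
  have : IsProbabilityMeasure (m.map F) := Measure.isProbabilityMeasure_map hF
  refine Measure.ext_of_integral_pow_eq_of_ae_norm_eq_one
    ((ae_map_iff hF (measurableSet_eq_fun (by fun_prop) measurable_const)).2 hinner)
    ae_m_norm_eq_one fun n => ?_
  rw [integral_map hF (by fun_prop)]
  rcases eq_or_ne n 0 with rfl | hn
  · simp
  have hpow : ∫ z, F z ^ n ∂m = f 0 ^ n :=
    integral_m_eq_of_radialLimit (hf.pow n)
      (fun z hz => by simpa using pow_le_one₀ (norm_nonneg _) (mem_ball_zero_iff.1 (hmap hz)).le)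
      (hbd.mono fun z hz => hz.pow n)
  rw [hpow, h0, zero_pow hn, integral_m_pow hn]

theorem stmt0 (f F : ℂ → ℂ)
    (hf : DifferentiableOn ℂ f (Metric.ball 0 1))
    (hmap : Set.MapsTo f (Metric.ball 0 1) (Metric.ball 0 1))
    (h0 : f 0 = 0)
    (hbd : ∀ᵐ z ∂m, Filter.Tendsto (fun r : ℝ => f ((r : ℂ) * z))
      (nhdsWithin 1 (Set.Iio 1)) (nhds (F z)))
    (hinner : ∀ᵐ z ∂m, ‖F z‖ = 1)
    (G : ℂ → ℂ) (hG : Integrable G m) :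
    ∫ z, G (F z) ∂m = ∫ z, G z ∂m := by
  have hF : AEMeasurable F m :=
    (aestronglyMeasurable_of_radialLimit hf.continuousOn hbd).aemeasurable
  have hmF := map_m_eq_m_of_radialLimit hf hmap h0 hbd hinner
  rw [← integral_map hF (by rw [hmF]; exact hG.aestronglyMeasurable), hmF]
end

section
/- Let f be an analytic self-map of the unit disc with f(0)=0 and 0 < |f'(0)| < 1. Then there exists a positive integer d = d(f) such that |f^n(w)| < |f'(0)|^n·(1−|w|)^{−d} for all w ∈ 𝔻 and all n ≥ 1. -/
open MeasureTheory Set Metric Filter Complex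

/-!
Write `a = ‖f' 0‖`. The Schwarz lemma, applied to `f z / z` followed by the disc automorphism
exchanging `f' 0` and `0`, gives `‖f z‖ ≤ ψ ‖z‖` with `ψ x = x (a + x) / (1 + a x)`.
In place of the Königs function of `ψ` we use the explicit `Φ x = x / (1 - x) ^ d`: for
`d ≥ 1 + 1 / a` it is increasing on `[0, 1)` and `Φ (ψ x) ≤ a Φ x`, which after clearing
denominators reads `(a + x) (1 + a x) ^ (d - 1) ≤ a (1 + x) ^ d` and follows from Bernoulli's
inequality. Hence `‖f^[n] w‖ ≤ Φ ‖f^[n] w‖ ≤ a ^ n Φ ‖w‖ < a ^ n (1 - ‖w‖) ^ (-d)`.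
-/

open ComplexConjugate

lemma normSq_one_sub_conj_mul_sub_normSq_sub (c w : ℂ) :
    normSq (1 - conj c * w) - normSq (c - w) = (1 - normSq c) * (1 - normSq w) := by
  simp only [normSq_apply, sub_re, sub_im, mul_re, mul_im, conj_re, conj_im, one_re, one_im]
  ring

lemma norm_sub_le_norm_one_sub_conj_mul {c w : ℂ} (hc : ‖c‖ ≤ 1) (hw : ‖w‖ ≤ 1) :
    ‖c - w‖ ≤ ‖1 - conj c * w‖ := by
  rw [← sq_le_sq₀ (norm_nonneg _) (norm_nonneg _), Complex.sq_norm, Complex.sq_norm]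
  have hc' : normSq c ≤ 1 := by rw [← Complex.sq_norm]; nlinarith [norm_nonneg c]
  have hw' : normSq w ≤ 1 := by rw [← Complex.sq_norm]; nlinarith [norm_nonneg w]
  nlinarith [normSq_one_sub_conj_mul_sub_normSq_sub c w,
    mul_nonneg (sub_nonneg.2 hc') (sub_nonneg.2 hw')]

lemma norm_mul_one_add_le_of_norm_sub_le {c w : ℂ} {t : ℝ} (ht₀ : 0 ≤ t) (ht₁ : t ≤ 1)
    (hcw : ‖c‖ * ‖w‖ ≤ 1) (h : ‖c - w‖ ≤ t * ‖1 - conj c * w‖) :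
    ‖w‖ * (1 + t * ‖c‖) ≤ ‖c‖ + t := by
  set X := (conj c * w).re
  have hX : X ≤ ‖c‖ * ‖w‖ := by
    simpa only [norm_mul, RCLike.norm_conj] using re_le_norm (conj c * w)
  have hsub : ‖c - w‖ ^ 2 = ‖c‖ ^ 2 + ‖w‖ ^ 2 - 2 * X := by
    simp only [Complex.sq_norm, normSq_apply, X, sub_re, sub_im, mul_re, conj_re, conj_im]
    ring
  have hden : ‖1 - conj c * w‖ ^ 2 = 1 - 2 * X + ‖c‖ ^ 2 * ‖w‖ ^ 2 := by
    simp only [Complex.sq_norm, normSq_apply, X, sub_re, sub_im, mul_re, mul_im, conj_re, conj_im,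
      one_re, one_im]
    ring
  -- squaring `h` and using `X ≤ ‖c‖‖w‖` leaves `(‖w‖ - ‖c‖)² ≤ t²(1 - ‖c‖‖w‖)²`
  have hsq : (‖w‖ - ‖c‖) ^ 2 ≤ (t * (1 - ‖c‖ * ‖w‖)) ^ 2 := by
    have h2 := pow_le_pow_left₀ (norm_nonneg _) h 2
    rw [mul_pow, hsub, hden] at h2
    nlinarith [mul_le_mul_of_nonneg_left hX (by nlinarith : (0:ℝ) ≤ 2 * (1 - t ^ 2))]
  have := abs_le_of_sq_le_sq' hsq (mul_nonneg ht₀ (sub_nonneg.2 hcw))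
  nlinarith [this.2]

lemma norm_mul_one_add_mul_le_of_mapsTo_closedBall {g : ℂ → ℂ}
    (hg : DifferentiableOn ℂ g (ball 0 1)) (hmaps : MapsTo g (ball 0 1) (closedBall 0 1))
    (hg₀ : ‖g 0‖ < 1) {z : ℂ} (hz : z ∈ ball (0 : ℂ) 1) :
    ‖g z‖ * (1 + ‖z‖ * ‖g 0‖) ≤ ‖g 0‖ + ‖z‖ := by
  set c := g 0
  have hgle : ∀ x ∈ ball (0 : ℂ) 1, ‖g x‖ ≤ 1 := fun x hx => mem_closedBall_zero_iff.1 (hmaps hx)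
  have hden : ∀ x ∈ ball (0 : ℂ) 1, 1 - conj c * g x ≠ 0 := by
    intro x hx hzero
    have : ‖conj c * g x‖ < 1 := by
      rw [norm_mul, RCLike.norm_conj]
      nlinarith [norm_nonneg c, norm_nonneg (g x), hgle x hx]
    rw [← sub_eq_zero.1 hzero, norm_one] at this
    exact this.false
  -- the disc automorphism exchanging `c` and `0`, composed with `g`, fixes the origin
  set h : ℂ → ℂ := fun x => (c - g x) / (1 - conj c * g x)
  have hh : DifferentiableOn ℂ h (ball 0 1) :=
    ((differentiableOn_const c).sub hg).div
      ((differentiableOn_const 1).sub ((differentiableOn_const _).mul hg)) hden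
  have hhmaps : MapsTo h (ball 0 1) (closedBall 0 1) := fun x hx => by
    rw [mem_closedBall_zero_iff, norm_div, div_le_one (norm_pos_iff.2 (hden x hx))]
    exact norm_sub_le_norm_one_sub_conj_mul hg₀.le (hgle x hx)
  have hhz := Complex.norm_le_norm_of_mapsTo_ball hh hhmaps (by simp [h, c])
    (mem_ball_zero_iff.1 hz)
  rw [norm_div, div_le_iff₀ (norm_pos_iff.2 (hden z hz))] at hhz
  exact norm_mul_one_add_le_of_norm_sub_le (norm_nonneg z) (mem_ball_zero_iff.1 hz).le
    (by nlinarith [norm_nonneg c, norm_nonneg (g z), hgle z hz]) hhz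

lemma norm_mul_one_add_mul_le_of_mapsTo_ball {f : ℂ → ℂ}
    (hf : DifferentiableOn ℂ f (ball 0 1)) (hmaps : MapsTo f (ball 0 1) (ball 0 1))
    (h₀ : f 0 = 0) (hlt : ‖deriv f 0‖ < 1) {z : ℂ} (hz : z ∈ ball (0 : ℂ) 1) :
    ‖f z‖ * (1 + ‖deriv f 0‖ * ‖z‖) ≤ ‖z‖ * (‖deriv f 0‖ + ‖z‖) := by
  have hg : DifferentiableOn ℂ (dslope f 0) (ball 0 1) :=
    (differentiableOn_dslope (isOpen_ball.mem_nhds (mem_ball_self one_pos))).2 hf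
  have hgmaps : MapsTo (dslope f 0) (ball 0 1) (closedBall 0 1) := fun x hx => by
    have hmaps' : MapsTo f (ball 0 1) (closedBall (f 0) 1) := by
      rw [h₀]; exact hmaps.mono_right ball_subset_closedBall
    simpa using norm_dslope_le_div_of_mapsTo_ball hf hmaps' hx
  have hfz : f z = z * dslope f 0 z := by
    simpa [h₀] using (sub_smul_dslope f 0 z).symm
  have := norm_mul_one_add_mul_le_of_mapsTo_closedBall hg hgmaps
    (by rwa [dslope_same]) hz
  rw [dslope_same] at this
  rw [hfz, norm_mul]
  nlinarith [norm_nonneg z]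

lemma add_mul_one_add_mul_pow_le {a x : ℝ} {k : ℕ} (ha₀ : 0 < a) (ha₁ : a ≤ 1)
    (hk : 1 ≤ a * k) (hx : 0 ≤ x) :
    (a + x) * (1 + a * x) ^ k ≤ a * (1 + x) ^ (k + 1) := by
  have hax : 0 < 1 + a * x := by positivity
  set u := (1 - a) * x / (1 + a * x)
  have hu : 0 ≤ u := div_nonneg (mul_nonneg (sub_nonneg.2 ha₁) hx) hax.le
  have hfactor : 1 + x = (1 + a * x) * (1 + u) := by
    simp only [u]; field_simp; ring
  have hbernoulli : 1 + k * u ≤ (1 + u) ^ k := one_add_mul_le_pow (by linarith) k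
  have hlin : a + x ≤ a * (1 + x) * (1 + k * u) := by
    have hk₁ : (1 : ℝ) ≤ k := by nlinarith
    have hdiff : a * (1 + x) * (1 + k * u) - (a + x)
        = (1 - a) * x * ((a * k - 1) + a * x * (k - 1)) / (1 + a * x) := by
      simp only [u]; field_simp; ring
    have : 0 ≤ (1 - a) * x * ((a * k - 1) + a * x * (k - 1)) / (1 + a * x) :=
      div_nonneg (mul_nonneg (mul_nonneg (sub_nonneg.2 ha₁) hx) (add_nonneg (sub_nonneg.2 hk)
        (mul_nonneg (mul_nonneg ha₀.le hx) (sub_nonneg.2 hk₁)))) hax.le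
    linarith
  calc (a + x) * (1 + a * x) ^ k
      ≤ a * (1 + x) * (1 + k * u) * (1 + a * x) ^ k := by gcongr
    _ ≤ a * (1 + x) * (1 + u) ^ k * (1 + a * x) ^ k := by gcongr
    _ = a * (1 + x) ^ (k + 1) := by rw [pow_succ, hfactor, mul_pow]; ring

lemma div_one_sub_pow_le_mul {a x y : ℝ} {k : ℕ} (ha₀ : 0 < a) (ha₁ : a ≤ 1)
    (hk : 1 ≤ a * k) (hx₀ : 0 ≤ x) (hx₁ : x < 1)
    (hy : y * (1 + a * x) ≤ x * (a + x)) :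
    y / (1 - y) ^ (k + 1) ≤ a * (x / (1 - x) ^ (k + 1)) := by
  have hax : 0 < 1 + a * x := by positivity
  set p := x * (a + x) / (1 + a * x)
  have hyp : y ≤ p := (le_div_iff₀ hax).2 hy
  have h1p : 1 - p = (1 - x) * (1 + x) / (1 + a * x) := by
    simp only [p]; field_simp; ring
  have hp₁ : 0 < 1 - p := by rw [h1p]; exact div_pos (by nlinarith) hax
  have hmono : y / (1 - y) ^ (k + 1) ≤ p / (1 - p) ^ (k + 1) :=
    div_le_div₀ (by positivity) hyp (pow_pos hp₁ _)
      (pow_le_pow_left₀ hp₁.le (by linarith) _)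
  have hsplit : p / (1 - p) ^ (k + 1)
      = x / (1 - x) ^ (k + 1) * ((a + x) * (1 + a * x) ^ k / (1 + x) ^ (k + 1)) := by
    have : 0 < 1 - x := by linarith
    rw [h1p, div_pow, mul_pow]
    simp only [p]; field_simp; ring
  have hratio : (a + x) * (1 + a * x) ^ k / (1 + x) ^ (k + 1) ≤ a :=
    (div_le_iff₀ (by positivity)).2 (add_mul_one_add_mul_pow_le ha₀ ha₁ hk hx₀)
  calc y / (1 - y) ^ (k + 1) ≤ p / (1 - p) ^ (k + 1) := hmono
    _ ≤ x / (1 - x) ^ (k + 1) * a := by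
      rw [hsplit]
      exact mul_le_mul_of_nonneg_left hratio (div_nonneg hx₀ (pow_nonneg (by linarith) _))
    _ = a * (x / (1 - x) ^ (k + 1)) := mul_comm _ _

lemma div_one_sub_pow_le_pow_mul {a : ℝ} {k : ℕ} {r : ℕ → ℝ} (ha₀ : 0 < a) (ha₁ : a ≤ 1)
    (hk : 1 ≤ a * k) (hr₀ : ∀ n, 0 ≤ r n) (hr₁ : ∀ n, r n < 1)
    (hrec : ∀ n, r (n + 1) * (1 + a * r n) ≤ r n * (a + r n)) (n : ℕ) :
    r n / (1 - r n) ^ (k + 1) ≤ a ^ n * (r 0 / (1 - r 0) ^ (k + 1)) := by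
  induction n with
  | zero => simp
  | succ n ih =>
    calc r (n + 1) / (1 - r (n + 1)) ^ (k + 1) ≤ a * (r n / (1 - r n) ^ (k + 1)) :=
          div_one_sub_pow_le_mul ha₀ ha₁ hk (hr₀ n) (hr₁ n) (hrec n)
      _ ≤ a * (a ^ n * (r 0 / (1 - r 0) ^ (k + 1))) := by gcongr
      _ = a ^ (n + 1) * (r 0 / (1 - r 0) ^ (k + 1)) := by ring

theorem stmt15 (f : ℂ → ℂ)
    (hf : DifferentiableOn ℂ f (Metric.ball 0 1))
    (hmap : Set.MapsTo f (Metric.ball 0 1) (Metric.ball 0 1))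
    (h0 : f 0 = 0)
    (hpos : 0 < ‖deriv f 0‖) (hlt : ‖deriv f 0‖ < 1) :
    ∃ d : ℕ, 0 < d ∧ ∀ w ∈ Metric.ball (0:ℂ) 1, ∀ n : ℕ, 1 ≤ n →
      ‖f^[n] w‖ < ‖deriv f 0‖ ^ n * (1 - ‖w‖) ^ (-(d : ℤ)) := by
  set a := ‖deriv f 0‖
  set k := ⌈a⁻¹⌉₊
  have hk : 1 ≤ a * k := by
    simpa [hpos.ne'] using mul_le_mul_of_nonneg_left (Nat.le_ceil a⁻¹) hpos.le
  refine ⟨k + 1, k.succ_pos, fun w hw n _ => ?_⟩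
  set r : ℕ → ℝ := fun m => ‖f^[m] w‖
  have hr₁ : ∀ m, r m < 1 := fun m => mem_ball_zero_iff.1 (hmap.iterate m hw)
  have hrec : ∀ m, r (m + 1) * (1 + a * r m) ≤ r m * (a + r m) := fun m => by
    simp only [r, Function.iterate_succ_apply']
    exact norm_mul_one_add_mul_le_of_mapsTo_ball hf hmap h0 hlt (hmap.iterate m hw)
  have hw₁ : 0 < 1 - ‖w‖ := sub_pos.2 (hr₁ 0)
  calc ‖f^[n] w‖ ≤ r n / (1 - r n) ^ (k + 1) :=
        le_div_self (norm_nonneg _) (pow_pos (sub_pos.2 (hr₁ n)) _)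
          (pow_le_one₀ (sub_nonneg.2 (hr₁ n).le) (by linarith [norm_nonneg (f^[n] w)]))
    _ ≤ a ^ n * (‖w‖ / (1 - ‖w‖) ^ (k + 1)) :=
        div_one_sub_pow_le_pow_mul hpos hlt.le hk (fun _ => norm_nonneg _) hr₁ hrec n
    _ < a ^ n * (1 - ‖w‖) ^ (-((k + 1 : ℕ) : ℤ)) := by
        rw [zpow_neg, zpow_natCast, ← one_div]
        gcongr
        exact hr₁ 0
end

section
/- Let f be an analytic self-map of 𝔻 with f(0)=0 and a=|f'(0)|<1. There exists n_0 = n_0(f) such that for all positive integers k, l, n with l ≤ n and n ≥ n_0, the l-th Taylor coefficient of g(w)=(f^n(w))^k satisfies |g^{(l)}(0)|/l! ≤ a^{kn/2}. -/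
open MeasureTheory Set Metric Filter Complex

open Topology Asymptotics

/-!
Write `a = ‖f'(0)‖`. If `a = 0` then `f = O(w²)` at `0`, hence `fⁿ = O(wⁿ⁺¹)`, and the Taylor
coefficients of `(fⁿ)ᵏ` of order `l ≤ n` vanish. If `a > 0`, put `c = a^{1/6}`. By the strict
Schwarz lemma `f` contracts `closedBall 0 c` by some factor `H < 1`, while near `0` it contracts by
`c⁵ > a`; so after a fixed number `s` of steps `fⁿ` is bounded by `c^{5(n-s)}` on the circle of
radius `c`, and Cauchy's estimate bounds the coefficient by `c^{5k(n-s) - l} ≤ c^{3kn} = a^{kn/2}`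
as soon as `n ≥ 5s`.
-/

theorem norm_iterate_le_pow_mul_norm {E : Type*} [SeminormedAddCommGroup E] {F : E → E}
    {ρ c : ℝ} (hc0 : 0 ≤ c) (hc1 : c ≤ 1)
    (hF : ∀ w ∈ closedBall (0 : E) ρ, ‖F w‖ ≤ c * ‖w‖) (n : ℕ) {w : E}
    (hw : w ∈ closedBall (0 : E) ρ) : ‖F^[n] w‖ ≤ c ^ n * ‖w‖ := by
  induction n with
  | zero => simp
  | succ n ih =>
    have hn : ‖F^[n] w‖ ≤ ‖w‖ :=
      ih.trans (mul_le_of_le_one_left (norm_nonneg w) (pow_le_one₀ hc0 hc1))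
    rw [mem_closedBall_zero_iff] at hw
    calc ‖F^[n + 1] w‖ = ‖F (F^[n] w)‖ := by rw [Function.iterate_succ_apply']
      _ ≤ c * ‖F^[n] w‖ := hF _ (mem_closedBall_zero_iff.2 (hn.trans hw))
      _ ≤ c * (c ^ n * ‖w‖) := by gcongr
      _ = c ^ (n + 1) * ‖w‖ := by ring

theorem HasDerivAt.eventually_norm_le_mul_norm {𝕜 E : Type*} [NontriviallyNormedField 𝕜]
    [NormedAddCommGroup E] [NormedSpace 𝕜 E] {f : 𝕜 → E} {f' : E} (hf : HasDerivAt f f' 0)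
    (h0 : f 0 = 0) {b : ℝ} (hb : ‖f'‖ < b) : ∀ᶠ w in 𝓝 0, ‖f w‖ ≤ b * ‖w‖ := by
  filter_upwards [(hasDerivAt_iff_isLittleO.1 hf).def (sub_pos.2 hb)] with w hw
  simp only [h0, sub_zero] at hw
  calc ‖f w‖ ≤ ‖f w - w • f'‖ + ‖w • f'‖ := norm_le_norm_sub_add _ _
    _ ≤ (b - ‖f'‖) * ‖w‖ + ‖w‖ * ‖f'‖ := by rw [norm_smul]; gcongr
    _ = b * ‖w‖ := by ring

theorem Complex.norm_dslope_lt_div_of_mapsTo_ball {E : Type*} [NormedAddCommGroup E]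
    [NormedSpace ℂ E] [StrictConvexSpace ℝ E] {f : ℂ → E} {c z : ℂ} {R₁ R₂ : ℝ}
    (hd : DifferentiableOn ℂ f (ball c R₁)) (h_maps : MapsTo f (ball c R₁) (closedBall (f c) R₂))
    (hf' : ‖deriv f c‖ < R₂ / R₁) (hz : z ∈ ball c R₁) : ‖dslope f c z‖ < R₂ / R₁ := by
  refine (norm_dslope_le_div_of_mapsTo_ball hd h_maps hz).lt_of_ne fun h_eq => hf'.ne ?_
  have h_aff := affine_of_mapsTo_ball_of_norm_dslope_eq_div hd h_maps hz h_eq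
  have h_lin : HasDerivAt (fun w => f c + (w - c) • dslope f c z) (dslope f c z) c := by
    simpa using (((hasDerivAt_id c).sub_const c).smul_const (dslope f c z)).const_add (f c)
  have h_nhds : ball c R₁ ∈ 𝓝 c := isOpen_ball.mem_nhds (mem_ball_self (pos_of_mem_ball hz))
  rw [(h_aff.eventuallyEq_of_mem h_nhds).deriv_eq, h_lin.deriv, h_eq]

theorem exists_lt_one_forall_closedBall_norm_le_mul_norm {f : ℂ → ℂ}
    (hf : DifferentiableOn ℂ f (ball 0 1)) (hmap : MapsTo f (ball 0 1) (ball 0 1)) (h0 : f 0 = 0)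
    (hf' : ‖deriv f 0‖ < 1) {r : ℝ} (hr0 : 0 ≤ r) (hr1 : r < 1) :
    ∃ H ∈ Ico (0 : ℝ) 1, ∀ w ∈ closedBall (0 : ℂ) r, ‖f w‖ ≤ H * ‖w‖ := by
  have h_maps : MapsTo f (ball 0 1) (closedBall (f 0) 1) := by
    rw [h0]; exact hmap.mono_right ball_subset_closedBall
  have hK : closedBall (0 : ℂ) r ⊆ ball 0 1 := closedBall_subset_ball hr1
  have hslope : DifferentiableOn ℂ (dslope f 0) (ball 0 1) :=
    (differentiableOn_dslope (ball_mem_nhds 0 one_pos)).2 hf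
  obtain ⟨z, hz, hmax⟩ := (isCompact_closedBall (0 : ℂ) r).exists_isMaxOn
    (nonempty_closedBall.2 hr0) (hslope.continuousOn.mono hK).norm
  refine ⟨‖dslope f 0 z‖, ⟨norm_nonneg _, ?_⟩, fun w hw => ?_⟩
  · simpa using norm_dslope_lt_div_of_mapsTo_ball hf h_maps (by simpa using hf') (hK hz)
  · have hfw : f w = w * dslope f 0 w := by simpa [h0] using (sub_smul_dslope f 0 w).symm
    rw [hfw, norm_mul, mul_comm]
    exact mul_le_mul_of_nonneg_right (hmax hw) (norm_nonneg w)

theorem exists_forall_norm_iterate_add_le_pow {f : ℂ → ℂ}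
    (hf : DifferentiableOn ℂ f (ball 0 1)) (hmap : MapsTo f (ball 0 1) (ball 0 1)) (h0 : f 0 = 0)
    {b r : ℝ} (hb : ‖deriv f 0‖ < b) (hb1 : b ≤ 1) (hr0 : 0 ≤ r) (hr1 : r < 1) :
    ∃ s : ℕ, ∀ q, ∀ w ∈ closedBall (0 : ℂ) r, ‖f^[q + s] w‖ ≤ b ^ q := by
  obtain ⟨H, ⟨hH0, hH1⟩, hfH⟩ :=
    exists_lt_one_forall_closedBall_norm_le_mul_norm hf hmap h0 (hb.trans_le hb1) hr0 hr1
  obtain ⟨ρ, hρ, hfρ⟩ := nhds_basis_closedBall.eventually_iff.1 <|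
    ((hf.differentiableAt (ball_mem_nhds 0 one_pos)).hasDerivAt.eventually_norm_le_mul_norm h0 hb)
  obtain ⟨s, hs⟩ := exists_pow_lt_of_lt_one hρ hH1
  have hb0 : 0 ≤ b := (norm_nonneg _).trans hb.le
  refine ⟨s, fun q w hw => ?_⟩
  have hsw : ‖f^[s] w‖ ≤ H ^ s := by
    refine (norm_iterate_le_pow_mul_norm hH0 hH1.le hfH s hw).trans ?_
    exact mul_le_of_le_one_right (by positivity) ((mem_closedBall_zero_iff.1 hw).trans hr1.le)
  rw [Function.iterate_add_apply]
  calc ‖f^[q] (f^[s] w)‖ ≤ b ^ q * ‖f^[s] w‖ :=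
        norm_iterate_le_pow_mul_norm hb0 hb1 (fun v hv => hfρ hv) q
          (mem_closedBall_zero_iff.2 (hsw.trans hs.le))
    _ ≤ b ^ q := mul_le_of_le_one_right (pow_nonneg hb0 q) (hsw.trans (pow_le_one₀ hH0 hH1.le))

theorem Asymptotics.isBigO_pow_pow_of_le {𝕜 : Type*} [NormedField 𝕜] {m n : ℕ} (h : m ≤ n) :
    (fun x : 𝕜 => x ^ n) =O[𝓝 0] fun x => x ^ m := by
  rcases h.eq_or_lt with rfl | h
  · exact isBigO_refl _ _
  · exact (isLittleO_pow_pow h).isBigO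

theorem Asymptotics.IsBigO.iterate_pow_succ {𝕜 : Type*} [NontriviallyNormedField 𝕜]
    {f : 𝕜 → 𝕜} (hf : f =O[𝓝 0] fun z => z ^ 2) (n : ℕ) :
    f^[n] =O[𝓝 0] fun z => z ^ (n + 1) := by
  have htend : Tendsto f (𝓝 0) (𝓝 0) :=
    hf.trans_tendsto (by simpa using (continuous_pow 2).tendsto (0 : 𝕜))
  induction n with
  | zero =>
    simp only [Function.iterate_zero, zero_add, pow_one]
    exact isBigO_refl _ _
  | succ n ih =>
    rw [Function.iterate_succ]
    refine ((ih.comp_tendsto htend).trans (hf.pow (n + 1))).trans ?_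
    simpa only [← pow_mul] using isBigO_pow_pow_of_le (𝕜 := 𝕜) (by omega : n + 2 ≤ 2 * (n + 1))

theorem iteratedDeriv_eq_zero_of_isBigO_pow {E : Type*} [NormedAddCommGroup E]
    [NormedSpace ℂ E] [CompleteSpace E] {g : ℂ → E} {N l : ℕ}
    (hg : ∀ᶠ z in 𝓝 0, DifferentiableAt ℂ g z) (hO : g =O[𝓝 0] fun z => z ^ N) (hl : l < N) :
    iteratedDeriv l g 0 = 0 := by
  obtain ⟨C, hC⟩ := hO.bound
  obtain ⟨ρ, hρ, hρg⟩ := nhds_basis_closedBall.eventually_iff.1 (hg.and hC)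
  have hcauchy : ∀ t ∈ Ioc 0 ρ, ‖iteratedDeriv l g 0‖ ≤ l.factorial * (C * t ^ N) / t ^ l := by
    intro t ht
    have hsub : closedBall (0 : ℂ) t ⊆ closedBall 0 ρ := closedBall_subset_closedBall ht.2
    refine norm_iteratedDeriv_le_of_forall_mem_sphere_norm_le l ht.1
      (DifferentiableOn.diffContOnCl_ball (fun z hz => (hρg hz).1.differentiableWithinAt) hsub)
      fun z hz => ?_
    simpa [mem_sphere_zero_iff_norm.1 hz] using (hρg (hsub (sphere_subset_closedBall hz))).2
  have hlim : Tendsto (fun t : ℝ => l.factorial * (C * t ^ N) / t ^ l) (𝓝[>] 0) (𝓝 0) := by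
    have hcont : Continuous fun t : ℝ => l.factorial * C * t ^ (N - l) := by fun_prop
    have h := hcont.tendsto' 0 0 (by simp [zero_pow (Nat.sub_ne_zero_of_lt hl)])
    refine (h.mono_left nhdsWithin_le_nhds).congr' ?_
    filter_upwards [self_mem_nhdsWithin] with t (ht : 0 < t)
    rw [pow_sub₀ _ ht.ne' hl.le]
    ring
  exact norm_le_zero_iff.1 (ge_of_tendsto hlim (eventually_of_mem (Ioc_mem_nhdsGT hρ) hcauchy))

theorem iteratedDeriv_pow_iterate_eq_zero {f : ℂ → ℂ} (hf : DifferentiableOn ℂ f (ball 0 1))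
    (hmap : MapsTo f (ball 0 1) (ball 0 1)) (h0 : f 0 = 0) (hf' : deriv f 0 = 0)
    {k l n : ℕ} (hk : 0 < k) (hl : l ≤ n) :
    iteratedDeriv l (fun w => (f^[n] w) ^ k) 0 = 0 := by
  have hslope : HasDerivAt (dslope f 0) (deriv (dslope f 0) 0) 0 :=
    (((differentiableOn_dslope (ball_mem_nhds 0 one_pos)).2 hf).differentiableAt
      (ball_mem_nhds 0 one_pos)).hasDerivAt
  have hslopeO : dslope f 0 =O[𝓝 0] fun z => z := by
    simpa [dslope_same, hf'] using hslope.isBigO_sub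
  have hfO : f =O[𝓝 0] fun z => z ^ 2 := by
    have hfw : f = fun z => z * dslope f 0 z :=
      funext fun z => by simpa [h0] using (sub_smul_dslope f 0 z).symm
    rw [hfw]
    simpa only [sq] using (isBigO_refl (fun z : ℂ => z) _).mul hslopeO
  refine iteratedDeriv_eq_zero_of_isBigO_pow (N := (n + 1) * k) ?_ ?_ (by nlinarith)
  · filter_upwards [ball_mem_nhds (0 : ℂ) one_pos] with z hz
    exact ((hf.iterate hmap n).differentiableAt (isOpen_ball.mem_nhds hz)).pow k
  · simpa only [pow_mul] using (hfO.iterate_pow_succ n).pow k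

theorem exists_norm_iteratedDeriv_pow_iterate_le_pow {f : ℂ → ℂ}
    (hf : DifferentiableOn ℂ f (ball 0 1)) (hmap : MapsTo f (ball 0 1) (ball 0 1)) (h0 : f 0 = 0)
    {c : ℝ} (hc0 : 0 < c) (hc1 : c < 1) (hfc : ‖deriv f 0‖ < c ^ 5) :
    ∃ n₀ : ℕ, ∀ k l n : ℕ, 0 < k → l ≤ n → n₀ ≤ n →
      ‖iteratedDeriv l (fun w => (f^[n] w) ^ k) 0‖ ≤ l.factorial * c ^ (3 * (k * n)) := by
  obtain ⟨s, hs⟩ := exists_forall_norm_iterate_add_le_pow hf hmap h0 hfc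
    (pow_le_one₀ hc0.le hc1.le) hc0.le hc1
  refine ⟨5 * s, fun k l n hk hln hn => ?_⟩
  obtain ⟨q, rfl⟩ : ∃ q, n = q + s := ⟨n - s, by omega⟩
  have hg : DifferentiableOn ℂ (fun w => (f^[q + s] w) ^ k) (ball 0 1) :=
    (hf.iterate hmap _).pow k
  refine (norm_iteratedDeriv_le_of_forall_mem_sphere_norm_le (C := ((c ^ 5) ^ q) ^ k) l hc0
    (hg.diffContOnCl_ball (closedBall_subset_ball hc1)) fun w hw => ?_).trans ?_
  · rw [norm_pow]
    exact pow_le_pow_left₀ (norm_nonneg _) (hs q w (sphere_subset_closedBall hw)) k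
  · rw [mul_div_assoc]
    gcongr
    rw [div_le_iff₀ (pow_pos hc0 l), ← pow_mul, ← pow_mul, ← pow_add]
    exact pow_le_pow_of_le_one hc0.le hc1.le (by nlinarith)

theorem stmt16 (f : ℂ → ℂ)
    (hf : DifferentiableOn ℂ f (Metric.ball 0 1))
    (hmap : Set.MapsTo f (Metric.ball 0 1) (Metric.ball 0 1))
    (h0 : f 0 = 0)
    (hlt : ‖deriv f 0‖ < 1) :
    ∃ n₀ : ℕ, ∀ k l n : ℕ, 0 < k → 0 < l → l ≤ n → n₀ ≤ n →
      ‖iteratedDeriv l (fun w => (f^[n] w) ^ k) 0‖ / (Nat.factorial l : ℝ)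
        ≤ ‖deriv f 0‖ ^ (((k * n : ℕ) : ℝ) / 2) := by
  rcases (norm_nonneg (deriv f 0)).eq_or_lt with ha | ha
  · refine ⟨0, fun k l n hk _ hln _ => ?_⟩
    rw [iteratedDeriv_pow_iterate_eq_zero hf hmap h0 (norm_eq_zero.1 ha.symm) hk hln, norm_zero,
      zero_div]
    positivity
  set c := ‖deriv f 0‖ ^ (6⁻¹ : ℝ)
  have hc0 : 0 < c := by positivity
  have hc1 : c < 1 := Real.rpow_lt_one (norm_nonneg _) hlt (by norm_num)
  have hac : ‖deriv f 0‖ = c ^ 6 := (Real.rpow_inv_natCast_pow (norm_nonneg _) (by norm_num)).symm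
  obtain ⟨n₀, hn₀⟩ := exists_norm_iteratedDeriv_pow_iterate_le_pow hf hmap h0 hc0 hc1
    (hac ▸ pow_lt_pow_right_of_lt_one₀ hc0 hc1 (by norm_num))
  refine ⟨n₀, fun k l n hk _ hln hn => ?_⟩
  have hexp : ‖deriv f 0‖ ^ (((k * n : ℕ) : ℝ) / 2) = c ^ (3 * (k * n)) := by
    rw [hac, ← Real.rpow_natCast c 6, ← Real.rpow_mul hc0.le, ← Real.rpow_natCast]
    push_cast
    ring_nf
  rw [hexp, div_le_iff₀ (by positivity), mul_comm]
  exact hn₀ k l n hk hln hn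
end
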